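/- There is no bishop Latin square of order 5: no 5×5 Latin square in which every cell has another cell on a common diagonal containing the same value. -/

import Mathlib

/-- An `n × n` Latin square with entries in `{1, …, n}`. -/
def latin (n : ℕ) (M : Fin n → Fin n → ℕ) : Prop :=
  (∀ i j, M i j ∈ Finset.Icc 1 n) ∧
  (∀ i, Function.Injective fun j => M i j) ∧
  (∀ j, Function.Injective fun i => M i j)

/-- Two cells are orthogonally adjacent. -/
def orthAdj (n : ℕ) (p q : Fin n × Fin n) : Prop :=
  (p.1 = q.1 ∧ (p.2.val + 1 = q.2.val ∨ q.2.val + 1 = p.2.val)) ∨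
  (p.2 = q.2 ∧ (p.1.val + 1 = q.1.val ∨ q.1.val + 1 = p.1.val))

/-- Two cells are a king's move apart (orthogonally or diagonally adjacent). -/
def kingAdj (n : ℕ) (p q : Fin n × Fin n) : Prop :=
  p ≠ q ∧ ((p.1.val : ℤ) - q.1.val).natAbs ≤ 1 ∧ ((p.2.val : ℤ) - q.2.val).natAbs ≤ 1

/-- Two cells are a knight's move apart. -/
def knightAdj (n : ℕ) (p q : Fin n × Fin n) : Prop :=
  (((p.1.val : ℤ) - q.1.val).natAbs = 1 ∧ ((p.2.val : ℤ) - q.2.val).natAbs = 2) ∨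
  (((p.1.val : ℤ) - q.1.val).natAbs = 2 ∧ ((p.2.val : ℤ) - q.2.val).natAbs = 1)

/-- Two cells are a bishop's move apart: on a common diagonal, at nonzero distance. -/
def bishopMove (n : ℕ) (p q : Fin n × Fin n) : Prop :=
  ((p.1.val : ℤ) - q.1.val).natAbs = ((p.2.val : ℤ) - q.2.val).natAbs ∧ p.1 ≠ q.1

/-- Two cells are orthogonally adjacent on the torus (wrapping around). -/
def torAdj (n : ℕ) (p q : Fin n × Fin n) : Prop :=
  p ≠ q ∧
    ((p.1 = q.1 ∧ ((p.2.val + 1) % n = q.2.val ∨ (q.2.val + 1) % n = p.2.val)) ∨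
     (p.2 = q.2 ∧ ((p.1.val + 1) % n = q.1.val ∨ (q.1.val + 1) % n = p.1.val)))

/-- Two values differ by exactly 1. -/
def diffOne (a b : ℕ) : Prop := ((a : ℤ) - (b : ℤ)).natAbs = 1

/-
The cells holding a fixed value form the graph of a permutation `σ`, and in a bishop Latin square
every point `(i, σ i)` shares a diagonal with another one. For order 5 a case check shows: such a
`σ` with `σ 1 = 2` has `(σ 2, σ 0) = (1, 0)` or `(3, 4)`; one with `σ 2 = 3` has `σ 1 = 2` or
`σ 0 = 0`; one with `σ 2 = 1` has `σ 1 = 2` or `σ 0 = 4`. So in the first case the permutation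
through `(2, 3)` meets the one through `(1, 2)` in row 1 or row 0, although they carry different
values; the second case is symmetric, with `(2, 1)` in place of `(2, 3)`.
-/

instance (n : ℕ) : DecidableRel (bishopMove n) := fun _ _ => by
  unfold bishopMove; infer_instance

def IsBishopMatched {n : ℕ} (σ : Fin n → Fin n) : Prop :=
  ∀ i, ∃ j, bishopMove n (i, σ i) (j, σ j)

instance {n : ℕ} (σ : Fin n → Fin n) : Decidable (IsBishopMatched σ) := by
  unfold IsBishopMatched; infer_instance

namespace latin

variable {n : ℕ} {M : Fin n → Fin n → ℕ}

theorem exists_apply_eq (hM : latin n M) (i : Fin n) {v : ℕ} (hv : v ∈ Finset.Icc 1 n) :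
    ∃ j, M i j = v := by
  obtain ⟨j, -, hj⟩ := Finset.surjOn_of_injOn_of_card_le (s := Finset.univ) (M i)
    (fun j _ => hM.1 i j) (hM.2.1 i).injOn (by simp) hv
  exact ⟨j, hj⟩

theorem exists_transversal (hM : latin n M) (i₀ j₀ : Fin n) :
    ∃ σ : Fin n → Fin n, σ i₀ = j₀ ∧ ∀ i, M i (σ i) = M i₀ j₀ := by
  choose σ hσ using fun i => hM.exists_apply_eq i (hM.1 i₀ j₀)
  exact ⟨σ, hM.2.1 i₀ (hσ i₀), hσ⟩

theorem injective_of_forall_eq (hM : latin n M) {σ : Fin n → Fin n} {v : ℕ}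
    (hσ : ∀ i, M i (σ i) = v) : Function.Injective σ := fun i i' h =>
  hM.2.2 (σ i) (show M i (σ i) = M i' (σ i) by rw [hσ i, h, hσ i'])

theorem apply_eq_of_apply_eq (hM : latin n M) {σ τ : Fin n → Fin n} {v w : ℕ}
    (hσ : ∀ i, M i (σ i) = v) (hτ : ∀ i, M i (τ i) = w) {i : Fin n} (h : σ i = τ i)
    (k : Fin n) : σ k = τ k :=
  hM.2.1 k (show M k (σ k) = M k (τ k) by rw [hσ k, hτ k, ← hσ i, ← hτ i, h])

end latin

theorem isBishopMatched_of_forall_eq {n : ℕ} {M : Fin n → Fin n → ℕ}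
    (hrow : ∀ i, Function.Injective fun j => M i j)
    (hB : ∀ p : Fin n × Fin n, ∃ q : Fin n × Fin n, bishopMove n p q ∧ M q.1 q.2 = M p.1 p.2)
    {σ : Fin n → Fin n} {v : ℕ} (hσ : ∀ i, M i (σ i) = v) : IsBishopMatched σ := by
  intro i
  obtain ⟨⟨k, l⟩, hmove, hkl⟩ := hB (i, σ i)
  have hl : l = σ k := hrow k (show M k l = M k (σ k) by rw [hkl, hσ, hσ])
  exact ⟨k, hl ▸ hmove⟩

theorem fin_five_eta {α : Type*} (σ : Fin 5 → α) : σ = ![σ 0, σ 1, σ 2, σ 3, σ 4] :=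
  (FinVec.etaExpand_eq σ).symm

namespace IsBishopMatched

variable {σ : Fin 5 → Fin 5}

theorem apply_two_of_apply_one_eq_two (hσ : IsBishopMatched σ) (hinj : Function.Injective σ)
    (h : σ 1 = 2) : σ 2 = 1 ∧ σ 0 = 0 ∨ σ 2 = 3 ∧ σ 0 = 4 := by
  have key : ∀ a c d e : Fin 5, Function.Injective ![a, 2, c, d, e] →
      IsBishopMatched ![a, 2, c, d, e] → c = 1 ∧ a = 0 ∨ c = 3 ∧ a = 4 := by
    decide
  rw [fin_five_eta σ, h] at hinj hσ
  exact key _ _ _ _ hinj hσ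

theorem apply_one_or_apply_zero_of_apply_two_eq_three (hσ : IsBishopMatched σ)
    (hinj : Function.Injective σ) (h : σ 2 = 3) : σ 1 = 2 ∨ σ 0 = 0 := by
  have key : ∀ a b d e : Fin 5, Function.Injective ![a, b, 3, d, e] →
      IsBishopMatched ![a, b, 3, d, e] → b = 2 ∨ a = 0 := by
    decide
  rw [fin_five_eta σ, h] at hinj hσ
  exact key _ _ _ _ hinj hσ

theorem apply_one_or_apply_zero_of_apply_two_eq_one (hσ : IsBishopMatched σ)
    (hinj : Function.Injective σ) (h : σ 2 = 1) : σ 1 = 2 ∨ σ 0 = 4 := by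
  have key : ∀ a b d e : Fin 5, Function.Injective ![a, b, 1, d, e] →
      IsBishopMatched ![a, b, 1, d, e] → b = 2 ∨ a = 4 := by
    decide
  rw [fin_five_eta σ, h] at hinj hσ
  exact key _ _ _ _ hinj hσ

end IsBishopMatched

/-- There is no bishop Latin square of order 5. -/
theorem stmt19 :
    ¬ ∃ M : Fin 5 → Fin 5 → ℕ, latin 5 M ∧
      ∀ p : Fin 5 × Fin 5, ∃ q : Fin 5 × Fin 5,
        bishopMove 5 p q ∧ M q.1 q.2 = M p.1 p.2 := by
  rintro ⟨M, hM, hB⟩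
  have hinj {σ : Fin 5 → Fin 5} {v : ℕ} (hσ : ∀ i, M i (σ i) = v) :=
    hM.injective_of_forall_eq hσ
  have hmatched {σ : Fin 5 → Fin 5} {v : ℕ} (hσ : ∀ i, M i (σ i) = v) :=
    isBishopMatched_of_forall_eq hM.2.1 hB hσ
  obtain ⟨σ, hσ1, hσ⟩ := hM.exists_transversal 1 2
  rcases (hmatched hσ).apply_two_of_apply_one_eq_two (hinj hσ) hσ1 with
    ⟨hσ2, hσ0⟩ | ⟨hσ2, hσ0⟩
  · obtain ⟨τ, hτ2, hτ⟩ := hM.exists_transversal 2 3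
    have h2 : σ 2 = τ 2 := by
      rcases (hmatched hτ).apply_one_or_apply_zero_of_apply_two_eq_three (hinj hτ) hτ2
        with h | h
      exacts [hM.apply_eq_of_apply_eq hσ hτ (hσ1.trans h.symm) 2,
        hM.apply_eq_of_apply_eq hσ hτ (hσ0.trans h.symm) 2]
    simp [hσ2, hτ2] at h2
  · obtain ⟨τ, hτ2, hτ⟩ := hM.exists_transversal 2 1
    have h2 : σ 2 = τ 2 := by
      rcases (hmatched hτ).apply_one_or_apply_zero_of_apply_two_eq_one (hinj hτ) hτ2
        with h | h
      exacts [hM.apply_eq_of_apply_eq hσ hτ (hσ1.trans h.symm) 2,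
        hM.apply_eq_of_apply_eq hσ hτ (hσ0.trans h.symm) 2]
    simp [hσ2, hτ2] at h2
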